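/- arXiv:1705.10652 — 5 statements merged into one kernel-verified Lean document; each statement's English description precedes it below -/
import Mathlib

section
/- If s(t) = 1 + εt with ε ∈ (0,1), then the function φ(t) = ln(1+εt)/ln((1+ε)/(1-ε)) satisfies the functional equation φ(t + s(t)) − φ(t − s(t)) = 1 for all t ≥ 0. -/
open Real

/-! Since `s` is affine, `1 + ε (t ± s t) = (1 ± ε)(1 + ε t)`, so the logarithms in the difference
differ exactly by `log ((1 + ε) / (1 - ε))`, the normalising constant of `φ`. -/

lemma log_mul_sub_log_mul {a b x : ℝ} (ha : a ≠ 0) (hb : b ≠ 0) (hx : x ≠ 0) :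
    log (a * x) - log (b * x) = log (a / b) := by
  rw [log_mul ha hx, log_mul hb hx, log_div ha hb]
  ring

lemma log_one_add_div_one_sub_pos {ε : ℝ} (h0 : 0 < ε) (h1 : ε < 1) :
    0 < log ((1 + ε) / (1 - ε)) :=
  log_pos <| by rw [lt_div_iff₀ (by linarith)]; linarith

theorem linear_boundary_functional_equation
    (ε : ℝ) (hε : ε ∈ Set.Ioo (0:ℝ) 1)
    (s : ℝ → ℝ) (hs : ∀ t, s t = 1 + ε * t)
    (φ : ℝ → ℝ) (hφ : ∀ t, φ t = Real.log (1 + ε * t) / Real.log ((1 + ε) / (1 - ε))) :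
    ∀ t : ℝ, 0 ≤ t → φ (t + s t) - φ (t - s t) = 1 := by
  obtain ⟨hε0, hε1⟩ := hε
  intro t ht
  have hpos : 0 < 1 + ε * t := by positivity
  have hup : 1 + ε * (t + s t) = (1 + ε) * (1 + ε * t) := by rw [hs]; ring
  have hdown : 1 + ε * (t - s t) = (1 - ε) * (1 + ε * t) := by rw [hs]; ring
  rw [hφ, hφ, hup, hdown, div_sub_div_same,
    log_mul_sub_log_mul (by linarith) (by linarith) hpos.ne',
    div_self (log_one_add_div_one_sub_pos hε0 hε1).ne']
end

section
/- If s(t) = √(1+εt) with ε ∈ (0,2), then φ(t) = (1/(2ε))·√(ε² + 4εt + 4) satisfies φ(t + s(t)) − φ(t − s(t)) = 1 for all t ≥ 0. -/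
/-!
Writing `u = s t`, the relation `u ^ 2 = 1 + ε t` turns `ε ^ 2 + 4 ε (t ± u) + 4` into the perfect
square `(2 u ± ε) ^ 2`. For `t ≥ 0` we have `u ≥ 1 > ε / 2`, so both square roots are `2 u ± ε`;
their difference `2 ε` cancels the factor `1 / (2 ε)`.
-/

open Real

section

variable {ε t u : ℝ}

theorem sqrt_quadratic_add_eq_of_sq_eq (hu : u ^ 2 = 1 + ε * t) (h : 0 ≤ 2 * u + ε) :
    √(ε ^ 2 + 4 * ε * (t + u) + 4) = 2 * u + ε := by
  rw [← Real.sqrt_sq h]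
  congr 1
  linear_combination (-4) * hu

theorem sqrt_quadratic_sub_eq_of_sq_eq (hu : u ^ 2 = 1 + ε * t) (h : ε ≤ 2 * u) :
    √(ε ^ 2 + 4 * ε * (t - u) + 4) = 2 * u - ε := by
  rw [← Real.sqrt_sq (sub_nonneg.mpr h)]
  congr 1
  linear_combination (-4) * hu

end

theorem parabolic_boundary_functional_equation
    (ε : ℝ) (hε : ε ∈ Set.Ioo (0:ℝ) 2)
    (s : ℝ → ℝ) (hs : ∀ t, s t = Real.sqrt (1 + ε * t))
    (φ : ℝ → ℝ) (hφ : ∀ t, φ t = (1 / (2 * ε)) * Real.sqrt (ε ^ 2 + 4 * ε * t + 4)) :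
    ∀ t : ℝ, 0 ≤ t → φ (t + s t) - φ (t - s t) = 1 := by
  obtain ⟨hε0, hε2⟩ := hε
  intro t ht
  have hεt : 0 ≤ ε * t := by positivity
  have hs_sq : s t ^ 2 = 1 + ε * t := by rw [hs, Real.sq_sqrt (by linarith)]
  have hs_one : 1 ≤ s t := by rw [hs]; exact Real.one_le_sqrt.mpr (by linarith)
  rw [hφ, hφ, sqrt_quadratic_add_eq_of_sq_eq hs_sq (by linarith),
    sqrt_quadratic_sub_eq_of_sq_eq hs_sq (by linarith)]
  field_simp
  ring
end

section
/- If s(t) = (1/ε)(−1 + √(1 + (1+εt)²)) with ε > 0, then φ(t) = εt/(1+εt) satisfies φ(t + s(t)) − φ(t − s(t)) = 1 for all t ≥ 0. -/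
open Real

/-- The boundary `s` of the statement for `ε = 1`; in general `ε * s t = hyperbolicShift (ε * t)`. -/
noncomputable def hyperbolicShift (y : ℝ) : ℝ := -1 + √(1 + (1 + y) ^ 2)

/-- With `a = 1 + y > 0` and `r = √(1 + a²) ∈ (1, a + 1)`, the two denominators `a + r - 1` and
`a + 1 - r` are positive, and their product `a² - (r - 1)² = 2r - 2` is their difference. -/
theorem hyperbolicShift_functional_equation {y : ℝ} (hy : -1 < y) :
    (y + hyperbolicShift y) / (1 + (y + hyperbolicShift y))
      - (y - hyperbolicShift y) / (1 + (y - hyperbolicShift y)) = 1 := by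
  unfold hyperbolicShift
  set a := 1 + y
  set r := √(1 + a ^ 2)
  have ha₀ : 0 < a := by linarith
  have hr₀ : 0 ≤ r := sqrt_nonneg _
  have hr₂ : r ^ 2 = 1 + a ^ 2 := sq_sqrt (by positivity)
  have hplus : 0 < 1 + (y + (-1 + r)) := by nlinarith
  have hminus : 0 < 1 + (y - (-1 + r)) := by nlinarith
  field_simp
  linear_combination hr₂

theorem hyperbolic_boundary_functional_equation
    (ε : ℝ) (hε : 0 < ε)
    (s : ℝ → ℝ) (hs : ∀ t, s t = (1 / ε) * (-1 + Real.sqrt (1 + (1 + ε * t) ^ 2)))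
    (φ : ℝ → ℝ) (hφ : ∀ t, φ t = ε * t / (1 + ε * t)) :
    ∀ t : ℝ, 0 ≤ t → φ (t + s t) - φ (t - s t) = 1 := by
  intro t ht
  have hεs : ε * s t = hyperbolicShift (ε * t) := by
    rw [hs, hyperbolicShift, ← mul_assoc, mul_one_div_cancel hε.ne', one_mul]
  rw [hφ, hφ, mul_add, mul_sub, hεs]
  exact hyperbolicShift_functional_equation (by nlinarith [mul_nonneg hε.le ht])
end

section
/- Let g ∈ H¹₀([0,1]), f ∈ L²([0,1]), and let φ be a C² solution of the functional equation with φ' > 0; let A_n = ∫₋₁¹ h(x) e^{2πin φ(x)} φ'(x) dx be the Fourier coefficients of the function h built from (g,f). Then 8π² m(0) Σ_{n∈ℤ} n²|A_n|² ≤ ‖g'‖²_{L²(0,1)} + ‖f‖²_{L²(0,1)} ≤ 8π² M(0) Σ_{n∈ℤ} n²|A_n|², where m(0) = min_{[−1,1]} φ' and M(0) = max_{[−1,1]} φ'. -/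
/-!
Since `h 1 = h (-1)`, and `exp (2πinφ)` also takes equal values at `±1` because
`φ 1 - φ (-1) = 1`, integrating by parts turns `2πin A_n` into minus the `n`-th coefficient of
`h' = H`, which equals `(g' ± f) / 2` on the two halves of `[-1, 1]`. The substitution `u = φ x`
turns the functions `exp (2πinφ)` into the standard Fourier basis of `L²(φ (-1), φ 1)`, so
Parseval gives `4π² ∑ n² ‖A_n‖² = ∫ H² / φ'`. Both bounds follow by comparing this with
`∫ H² = (‖g'‖² + ‖f‖²) / 2`, using `m0 ≤ φ' ≤ M0`.
-/

open Real MeasureTheory intervalIntegral Set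

open Complex in
theorem tsum_norm_sq_integral_exp_mul {a b : ℝ} (hab : a < b) {G : ℝ → ℂ}
    (hG : MemLp G 2 (volume.restrict (Ioc a b))) :
    ∑' n : ℤ, ‖∫ u in a..b, exp (2 * π * I * n * u / (b - a)) * G u‖ ^ 2
      = (b - a) * ∫ u in a..b, ‖G u‖ ^ 2 := by
  have hL : 0 < b - a := sub_pos.2 hab
  have hcoeff : ∀ n : ℤ, ‖∫ u in a..b, exp (2 * π * I * n * u / (b - a)) * G u‖ ^ 2
      = (b - a) ^ 2 * ‖fourierCoeffOn hab G (-n)‖ ^ 2 := by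
    intro n
    rw [fourierCoeffOn_eq_integral, norm_smul, mul_pow, ← mul_assoc, ← mul_pow,
      Real.norm_of_nonneg (by positivity), mul_one_div_cancel hL.ne', one_pow, one_mul]
    simp only [neg_neg, fourier_coe_apply, smul_eq_mul, ofReal_sub]
  rw [tsum_congr hcoeff, tsum_mul_left,
    tsum_comp_neg (fun n => ‖fourierCoeffOn hab G n‖ ^ 2),
    tsum_sq_fourierCoeffOn hab hG, smul_eq_mul]
  field_simp

section ChangeOfVariables

variable {a b : ℝ} {φ φ' : ℝ → ℝ}

theorem strictMonoOn_of_hasDerivAt_pos (hφ : ∀ x ∈ Icc a b, HasDerivAt φ (φ' x) x)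
    (hφ' : ∀ x ∈ Icc a b, 0 < φ' x) : StrictMonoOn φ (Icc a b) := by
  refine strictMonoOn_of_deriv_pos (convex_Icc a b)
    (fun x hx => (hφ x hx).continuousAt.continuousWithinAt) fun x hx => ?_
  rw [interior_Icc] at hx
  rw [(hφ x (Ioo_subset_Icc_self hx)).deriv]
  exact hφ' x (Ioo_subset_Icc_self hx)

theorem image_Ioc_of_hasDerivAt_pos (hab : a ≤ b) (hφ : ∀ x ∈ Icc a b, HasDerivAt φ (φ' x) x)
    (hφ' : ∀ x ∈ Icc a b, 0 < φ' x) : φ '' Ioc a b = Ioc (φ a) (φ b) :=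
  ContinuousOn.image_Ioc_of_strictMonoOn hab
    (fun x hx => (hφ x hx).continuousAt.continuousWithinAt)
    (strictMonoOn_of_hasDerivAt_pos hφ hφ')

variable {E : Type*} [NormedAddCommGroup E] [NormedSpace ℝ E]

theorem integral_comp_smul_deriv_of_pos (hab : a ≤ b)
    (hφ : ∀ x ∈ Icc a b, HasDerivAt φ (φ' x) x) (hφ' : ∀ x ∈ Icc a b, 0 < φ' x) (k : ℝ → E) :
    ∫ u in φ a..φ b, k u = ∫ x in a..b, φ' x • k (φ x) := by
  have hmono := strictMonoOn_of_hasDerivAt_pos hφ hφ'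
  rw [integral_of_le (hmono.monotoneOn (left_mem_Icc.2 hab) (right_mem_Icc.2 hab) hab),
    integral_of_le hab, ← image_Ioc_of_hasDerivAt_pos hab hφ hφ',
    integral_image_eq_integral_abs_deriv_smul measurableSet_Ioc
      (fun x hx => (hφ x (Ioc_subset_Icc_self hx)).hasDerivWithinAt)
      (hmono.injOn.mono Ioc_subset_Icc_self)]
  refine setIntegral_congr_fun measurableSet_Ioc fun x hx => ?_
  rw [abs_of_pos (hφ' x (Ioc_subset_Icc_self hx))]

theorem intervalIntegrable_comp_smul_deriv_iff_of_pos (hab : a ≤ b)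
    (hφ : ∀ x ∈ Icc a b, HasDerivAt φ (φ' x) x) (hφ' : ∀ x ∈ Icc a b, 0 < φ' x) (k : ℝ → E) :
    IntervalIntegrable k volume (φ a) (φ b) ↔
      IntervalIntegrable (fun x => φ' x • k (φ x)) volume a b := by
  have hmono := strictMonoOn_of_hasDerivAt_pos hφ hφ'
  rw [intervalIntegrable_iff_integrableOn_Ioc_of_le
      (hmono.monotoneOn (left_mem_Icc.2 hab) (right_mem_Icc.2 hab) hab),
    intervalIntegrable_iff_integrableOn_Ioc_of_le hab, ← image_Ioc_of_hasDerivAt_pos hab hφ hφ',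
    integrableOn_image_iff_integrableOn_abs_deriv_smul measurableSet_Ioc
      (fun x hx => (hφ x (Ioc_subset_Icc_self hx)).hasDerivWithinAt)
      (hmono.injOn.mono Ioc_subset_Icc_self)]
  refine integrableOn_congr_fun (fun x hx => ?_) measurableSet_Ioc
  rw [abs_of_pos (hφ' x (Ioc_subset_Icc_self hx))]

open Complex in
theorem tsum_norm_sq_integral_mul_exp_comp (hab : a < b)
    (hφ : ∀ x ∈ Icc a b, HasDerivAt φ (φ' x) x) (hφ' : ∀ x ∈ Icc a b, 0 < φ' x) {H : ℝ → ℂ}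
    (hH : IntervalIntegrable H volume a b)
    (hH2 : IntervalIntegrable (fun x => ‖H x‖ ^ 2 / φ' x) volume a b) :
    ∑' n : ℤ, ‖∫ x in a..b, H x * exp (2 * π * I * n * φ x / (φ b - φ a))‖ ^ 2
      = (φ b - φ a) * ∫ x in a..b, ‖H x‖ ^ 2 / φ' x := by
  have hmono := strictMonoOn_of_hasDerivAt_pos hφ hφ'
  have hφab : φ a < φ b := hmono (left_mem_Icc.2 hab.le) (right_mem_Icc.2 hab.le) hab
  have hIoo : uIoo a b ⊆ Icc a b := by rw [uIoo_of_le hab.le]; exact Ioo_subset_Icc_self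
  -- `G` is `H / φ'` carried over to `[φ a, φ b]` along `φ`: its Fourier coefficients are the sums
  -- on the left, and its squared `L²` norm is the weighted integral on the right.
  set ψ := Function.invFunOn φ (Icc a b)
  have hψ : ∀ x ∈ Icc a b, ψ (φ x) = x := fun x hx => hmono.injOn.leftInvOn_invFunOn hx
  set G : ℝ → ℂ := fun u => H (ψ u) / φ' (ψ u)
  have hGφ : ∀ x ∈ Icc a b, φ' x • G (φ x) = H x := fun x hx => by
    simp only [G, hψ x hx, Complex.real_smul]
    field_simp [(hφ' x hx).ne']
  have hGφ_sq : ∀ x ∈ Icc a b, φ' x • ‖G (φ x)‖ ^ 2 = ‖H x‖ ^ 2 / φ' x := fun x hx => by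
    rw [← hGφ x hx, norm_smul, Real.norm_of_nonneg (hφ' x hx).le, smul_eq_mul]
    field_simp [(hφ' x hx).ne']
  have hG : MemLp G 2 (volume.restrict (Ioc (φ a) (φ b))) := by
    have hGint := (intervalIntegrable_comp_smul_deriv_iff_of_pos hab.le hφ hφ' G).2
      (hH.congr_uIoo fun x hx => (hGφ x (hIoo hx)).symm)
    have hGsq := (intervalIntegrable_comp_smul_deriv_iff_of_pos hab.le hφ hφ' (‖G ·‖ ^ 2)).2
      (hH2.congr_uIoo fun x hx => (hGφ_sq x (hIoo hx)).symm)
    rw [intervalIntegrable_iff_integrableOn_Ioc_of_le hφab.le] at hGint hGsq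
    exact (memLp_two_iff_integrable_sq_norm hGint.aestronglyMeasurable).2 hGsq
  have hcoeff : ∀ n : ℤ, ∫ x in a..b, H x * exp (2 * π * I * n * φ x / (φ b - φ a))
      = ∫ u in φ a..φ b, exp (2 * π * I * n * u / (φ b - φ a)) * G u := fun n => by
    rw [integral_comp_smul_deriv_of_pos hab.le hφ hφ']
    refine integral_congr fun x hx => ?_
    rw [← mul_smul_comm, hGφ x (uIcc_of_le hab.le ▸ hx), mul_comm]
  simp only [hcoeff]
  rw [tsum_norm_sq_integral_exp_mul hφab hG, integral_comp_smul_deriv_of_pos hab.le hφ hφ']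
  congr 1
  exact integral_congr fun x hx => hGφ_sq x (uIcc_of_le hab.le ▸ hx)

end ChangeOfVariables

theorem integral_mul_deriv_eq_deriv_mul_of_hasDerivAt_off_countable {A : Type*} [NormedRing A]
    [NormedAlgebra ℝ A] [CompleteSpace A] {u v u' v' : ℝ → A} {a b : ℝ} {s : Set ℝ}
    (hab : a ≤ b) (hs : s.Countable) (hu : ContinuousOn u (Icc a b))
    (hv : ContinuousOn v (Icc a b)) (huu' : ∀ x ∈ Ioo a b \ s, HasDerivAt u (u' x) x)
    (hvv' : ∀ x ∈ Ioo a b \ s, HasDerivAt v (v' x) x) (hu' : IntervalIntegrable u' volume a b)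
    (hv' : IntervalIntegrable v' volume a b) :
    ∫ x in a..b, u x * v' x = u b * v b - u a * v a - ∫ x in a..b, u' x * v x := by
  have hu'v := hu'.mul_continuousOn (uIcc_of_le hab ▸ hv)
  have huv' := hv'.continuousOn_mul (uIcc_of_le hab ▸ hu)
  rw [← integral_eq_of_hasDerivAt_off_countable_of_le (fun x => u x * v x) _ hab hs (hu.mul hv)
    (fun x hx => (huu' x hx).mul (hvv' x hx)) (hu'v.add huv'), integral_add hu'v huv']
  abel

open Complex in
theorem exp_two_pi_I_mul_div_sub_right (n : ℤ) (x y : ℝ) :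
    exp (2 * π * I * n * x / (x - y)) = exp (2 * π * I * n * y / (x - y)) := by
  rcases eq_or_ne x y with rfl | hxy
  · rfl
  rw [exp_eq_exp_iff_exists_int]
  refine ⟨n, ?_⟩
  have hxy' : (x : ℂ) - y ≠ 0 := sub_ne_zero.2 (by exact_mod_cast hxy)
  field_simp
  ring

open Complex in
theorem mul_integral_mul_exp_comp_mul_deriv {a b : ℝ} {s : Set ℝ} (hab : a ≤ b)
    (hs : s.Countable) {u u' : ℝ → ℂ} (hu : ContinuousOn u (Icc a b))
    (huu' : ∀ x ∈ Ioo a b \ s, HasDerivAt u (u' x) x) (hu' : IntervalIntegrable u' volume a b)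
    (hper : u b = u a) {φ φ' : ℝ → ℝ} (hφ : ∀ x ∈ Icc a b, HasDerivAt φ (φ' x) x)
    (hφ' : IntervalIntegrable φ' volume a b) (n : ℤ) :
    2 * π * I * n / (φ b - φ a) *
        ∫ x in a..b, u x * exp (2 * π * I * n * φ x / (φ b - φ a)) * φ' x
      = -∫ x in a..b, u' x * exp (2 * π * I * n * φ x / (φ b - φ a)) := by
  have hE : ∀ x ∈ Icc a b, HasDerivAt (fun y => exp (2 * π * I * n * φ y / (φ b - φ a)))
      (2 * π * I * n / (φ b - φ a) * φ' x * exp (2 * π * I * n * φ x / (φ b - φ a))) x :=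
      fun x hx => by
    convert (((hφ x hx).ofReal_comp.const_mul (2 * π * I * n)).div_const
      ((φ b : ℂ) - φ a)).cexp using 1
    ring
  have hparts := integral_mul_deriv_eq_deriv_mul_of_hasDerivAt_off_countable hab hs hu
    (fun x hx => (hE x hx).continuousAt.continuousWithinAt)
    huu' (fun x hx => hE x (Ioo_subset_Icc_self hx.1)) hu'
    ((IntervalIntegrable.const_mul ⟨hφ'.1.ofReal, hφ'.2.ofReal⟩ _).mul_continuousOn
      (uIcc_of_le hab ▸ fun x hx => (hE x hx).continuousAt.continuousWithinAt))
  rw [← intervalIntegral.integral_const_mul]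
  calc _ = ∫ x in a..b, u x * (2 * π * I * n / (φ b - φ a) * φ' x *
          exp (2 * π * I * n * φ x / (φ b - φ a))) := integral_congr fun x _ => by ring
    _ = _ := by rw [hparts, hper, exp_two_pi_I_mul_div_sub_right, sub_self, zero_sub]

open Complex in
theorem four_pi_sq_mul_tsum_sq_mul_norm_sq_integral_mul_exp_comp {a b : ℝ} {s : Set ℝ}
    (hab : a < b) (hs : s.Countable) {u u' : ℝ → ℂ} (hu : ContinuousOn u (Icc a b))
    (huu' : ∀ x ∈ Ioo a b \ s, HasDerivAt u (u' x) x) (hu' : IntervalIntegrable u' volume a b)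
    (hper : u b = u a) {φ φ' : ℝ → ℝ} (hφ : ∀ x ∈ Icc a b, HasDerivAt φ (φ' x) x)
    (hφ'pos : ∀ x ∈ Icc a b, 0 < φ' x) (hφ' : IntervalIntegrable φ' volume a b)
    (hu'φ' : IntervalIntegrable (fun x => ‖u' x‖ ^ 2 / φ' x) volume a b)
    (hφab : φ b - φ a = 1) :
    4 * π ^ 2 * ∑' n : ℤ, (n : ℝ) ^ 2 * ‖∫ x in a..b, u x * exp (2 * π * I * n * φ x) * φ' x‖ ^ 2
      = ∫ x in a..b, ‖u' x‖ ^ 2 / φ' x := by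
  have hφabC : (φ b : ℂ) - φ a = 1 := by exact_mod_cast hφab
  have hParseval := tsum_norm_sq_integral_mul_exp_comp hab hφ hφ'pos hu' hu'φ'
  simp only [hφabC, hφab, div_one, one_mul] at hParseval
  rw [← hParseval, ← tsum_mul_left]
  refine tsum_congr fun n => ?_
  have hIBP := mul_integral_mul_exp_comp_mul_deriv hab.le hs hu huu' hu' hper hφ hφ' n
  simp only [hφabC, div_one] at hIBP
  rw [← norm_neg (∫ x in a..b, u' x * _), ← hIBP]
  simp only [Complex.norm_mul, Complex.norm_ofNat, Complex.norm_real, norm_eq_abs,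
    abs_of_pos pi_pos, Complex.norm_I, mul_one, Complex.norm_intCast, mul_pow, sq_abs]
  ring

theorem intervalIntegrable_of_eqOn_Ioo {E : Type*} [NormedAddCommGroup E] {f g : ℝ → E}
    {a b : ℝ} (hab : a ≤ b) (hg : ContinuousOn g (Icc a b)) (hfg : EqOn f g (Ioo a b)) :
    IntervalIntegrable f volume a b :=
  (hg.intervalIntegrable_of_Icc hab).congr_uIoo (uIoo_of_le hab ▸ hfg.symm)

noncomputable def reflectGlue (P Q : ℝ → ℝ) (x : ℝ) : ℝ := if 0 < x then P x else Q (-x)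

section ReflectGlue

variable {P Q P' Q' h : ℝ → ℝ}

theorem reflectGlue_of_pos {x : ℝ} (hx : 0 < x) : reflectGlue P Q x = P x := if_pos hx

theorem reflectGlue_of_nonpos {x : ℝ} (hx : x ≤ 0) : reflectGlue P Q x = Q (-x) :=
  if_neg hx.not_gt

theorem continuousOn_Icc_of_reflect (hP : ContinuousOn P (Icc 0 1))
    (hQ : ContinuousOn Q (Icc 0 1)) (hPQ : P 0 = Q 0) (hhP : ∀ x ∈ Icc (0 : ℝ) 1, h x = P x)
    (hhQ : ∀ x ∈ Ico (-1 : ℝ) 0, h x = Q (-x)) : ContinuousOn h (Icc (-1) 1) := by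
  rw [← Icc_union_Icc_eq_Icc (by norm_num : (-1 : ℝ) ≤ 0) zero_le_one]
  refine ContinuousOn.union_of_isClosed ?_ (hP.congr hhP) isClosed_Icc isClosed_Icc
  refine (hQ.comp continuousOn_neg fun x hx => ⟨by linarith [hx.2], by linarith [hx.1]⟩).congr
    fun x hx => ?_
  rcases hx.2.lt_or_eq with hx0 | rfl
  · exact hhQ x ⟨hx.1, hx0⟩
  · simp [hhP 0 (left_mem_Icc.2 zero_le_one), hPQ]

theorem hasDerivAt_of_reflect (hhP : ∀ x ∈ Icc (0 : ℝ) 1, h x = P x)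
    (hhQ : ∀ x ∈ Ico (-1 : ℝ) 0, h x = Q (-x)) (hP' : ∀ x ∈ Ioo (0 : ℝ) 1, HasDerivAt P (P' x) x)
    (hQ' : ∀ x ∈ Ioo (0 : ℝ) 1, HasDerivAt Q (-Q' x) x) :
    ∀ x ∈ Ioo (-1 : ℝ) 1 \ {0}, HasDerivAt h (reflectGlue P' Q' x) x := by
  rintro x ⟨hx, hx0 : x ≠ 0⟩
  rcases hx0.lt_or_gt with hneg | hpos
  · rw [reflectGlue_of_nonpos hneg.le]
    have hmem : -x ∈ Ioo (0 : ℝ) 1 := ⟨by linarith, by linarith [hx.1]⟩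
    have hQneg : HasDerivAt (fun y => Q (-y)) (Q' (-x)) x := by
      simpa [Function.comp_def] using (hQ' (-x) hmem).comp x (hasDerivAt_neg x)
    refine hQneg.congr_of_eventuallyEq (Filter.mem_of_superset (Ioo_mem_nhds hx.1 hneg) ?_)
    exact fun y hy => hhQ y ⟨hy.1.le, hy.2⟩
  · rw [reflectGlue_of_pos hpos]
    exact (hP' x ⟨hpos, hx.2⟩).congr_of_eventuallyEq
      (Filter.mem_of_superset (Icc_mem_nhds hpos hx.2) fun y hy => hhP y hy)

theorem intervalIntegrable_comp_reflectGlue {E : Type*} [NormedAddCommGroup E] {Φ : ℝ × ℝ → E}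
    (hΦ : Continuous Φ) (hP : ContinuousOn P (Icc 0 1)) (hQ : ContinuousOn Q (Icc 0 1)) :
    IntervalIntegrable (fun x => Φ (x, reflectGlue P Q x)) volume (-1) 1 := by
  refine (intervalIntegrable_of_eqOn_Ioo (g := fun x => Φ (x, Q (-x))) (by norm_num) ?_ ?_).trans
    (intervalIntegrable_of_eqOn_Ioo (g := fun x => Φ (x, P x)) zero_le_one ?_ ?_)
  · exact hΦ.comp_continuousOn (continuousOn_id.prodMk (hQ.comp continuousOn_neg
      fun x hx => ⟨by linarith [hx.2], by linarith [hx.1]⟩))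
  · exact fun x hx => by simp only [reflectGlue_of_nonpos hx.2.le]
  · exact hΦ.comp_continuousOn (continuousOn_id.prodMk hP)
  · exact fun x hx => by simp only [reflectGlue_of_pos hx.1]

theorem integral_sq_reflectGlue (hP : ContinuousOn P (Icc 0 1)) (hQ : ContinuousOn Q (Icc 0 1)) :
    ∫ x in (-1 : ℝ)..1, reflectGlue P Q x ^ 2
      = (∫ x in (0 : ℝ)..1, P x ^ 2) + ∫ x in (0 : ℝ)..1, Q x ^ 2 := by
  have hneg : ∫ x in (-1 : ℝ)..0, reflectGlue P Q x ^ 2 = ∫ x in (0 : ℝ)..1, Q x ^ 2 := by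
    rw [integral_congr_uIoo (g := fun x => Q (-x) ^ 2)]
    · simpa using integral_comp_neg (a := -1) (b := 0) (fun x => Q x ^ 2)
    · intro x hx
      rw [uIoo_of_le (by norm_num)] at hx
      simp only [reflectGlue_of_nonpos hx.2.le]
  have hpos : ∫ x in (0 : ℝ)..1, reflectGlue P Q x ^ 2 = ∫ x in (0 : ℝ)..1, P x ^ 2 := by
    refine integral_congr_uIoo fun x hx => ?_
    rw [uIoo_of_le zero_le_one] at hx
    simp only [reflectGlue_of_pos hx.1]
  have hint := intervalIntegrable_comp_reflectGlue (Φ := fun p => p.2 ^ 2) (by fun_prop) hP hQ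
  rw [← integral_add_adjacent_intervals (b := 0)
    (hint.mono_set (uIcc_subset_uIcc (by simp) (by simp)))
    (hint.mono_set (uIcc_subset_uIcc (by simp) (by simp))), hneg, hpos, add_comm]

theorem integral_sq_reflectGlue_half_add_half_sub {u v : ℝ → ℝ} (hu : ContinuousOn u (Icc 0 1))
    (hv : ContinuousOn v (Icc 0 1)) :
    ∫ x in (-1 : ℝ)..1, reflectGlue (fun x => (u x + v x) / 2) (fun x => (u x - v x) / 2) x ^ 2
      = ((∫ x in (0 : ℝ)..1, u x ^ 2) + ∫ x in (0 : ℝ)..1, v x ^ 2) / 2 := by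
  have hsq : ∀ {k : ℝ → ℝ}, ContinuousOn k (Icc 0 1) →
      IntervalIntegrable (fun x => k x ^ 2) volume 0 1 :=
    fun hk => (hk.pow 2).intervalIntegrable_of_Icc zero_le_one
  have hP : ContinuousOn (fun x => (u x + v x) / 2) (Icc 0 1) := (hu.add hv).div_const 2
  have hQ : ContinuousOn (fun x => (u x - v x) / 2) (Icc 0 1) := (hu.sub hv).div_const 2
  rw [integral_sq_reflectGlue hP hQ, ← integral_add (hsq hP) (hsq hQ),
    ← integral_add (hsq hu) (hsq hv), ← intervalIntegral.integral_div]
  exact integral_congr fun x _ => by ring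

end ReflectGlue

theorem hasDerivAt_integral_of_continuousOn_Icc {E : Type*} [NormedAddCommGroup E]
    [NormedSpace ℝ E] [CompleteSpace E] {f : ℝ → E} {a b x : ℝ}
    (hf : ContinuousOn f (Icc a b)) (hx : x ∈ Ioo a b) :
    HasDerivAt (fun y => ∫ t in a..y, f t) (f x) x :=
  integral_hasDerivAt_right
    ((hf.mono (Icc_subset_Icc le_rfl hx.2.le)).intervalIntegrable_of_Icc hx.1.le)
    ((hf.mono Ioo_subset_Icc_self).stronglyMeasurableAtFilter isOpen_Ioo x hx)
    (hf.continuousAt (Icc_mem_nhds hx.1 hx.2))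

section Halves

variable {g g' f F h : ℝ → ℝ}

theorem continuousOn_Icc_of_halves (hg : ∀ x ∈ Icc (0 : ℝ) 1, HasDerivAt g (g' x) x)
    (hf : ContinuousOn f (Icc 0 1)) (hg0 : g 0 = 0) (hF : ∀ x, F x = ∫ t in (0 : ℝ)..x, f t)
    (hdef : ∀ x ∈ Icc (0 : ℝ) 1, h x = (g x + F x) / 2)
    (hdef' : ∀ x ∈ Ico (-1 : ℝ) 0, h x = (-g (-x) + F (-x)) / 2) :
    ContinuousOn h (Icc (-1) 1) := by
  have hgc : ContinuousOn g (Icc 0 1) := fun x hx => (hg x hx).continuousAt.continuousWithinAt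
  have hFc : ContinuousOn F (Icc 0 1) := by
    rw [funext hF]
    simpa using continuousOn_primitive_interval (μ := volume) (a := 0) (b := 1)
      (uIcc_of_le (zero_le_one' ℝ) ▸ hf.integrableOn_Icc)
  exact continuousOn_Icc_of_reflect (Q := fun x => (-g x + F x) / 2)
    ((hgc.add hFc).div_const 2) ((hgc.neg.add hFc).div_const 2) (by simp [hg0, hF]) hdef hdef'

theorem hasDerivAt_of_halves (hg : ∀ x ∈ Icc (0 : ℝ) 1, HasDerivAt g (g' x) x)
    (hf : ContinuousOn f (Icc 0 1)) (hF : ∀ x, F x = ∫ t in (0 : ℝ)..x, f t)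
    (hdef : ∀ x ∈ Icc (0 : ℝ) 1, h x = (g x + F x) / 2)
    (hdef' : ∀ x ∈ Ico (-1 : ℝ) 0, h x = (-g (-x) + F (-x)) / 2) :
    ∀ x ∈ Ioo (-1 : ℝ) 1 \ {0},
      HasDerivAt h (reflectGlue (fun x => (g' x + f x) / 2) (fun x => (g' x - f x) / 2) x) x := by
  have hFd : ∀ x ∈ Ioo (0 : ℝ) 1, HasDerivAt F (f x) x := fun x hx => by
    rw [funext hF]
    exact hasDerivAt_integral_of_continuousOn_Icc hf hx
  exact hasDerivAt_of_reflect (Q := fun x => (-g x + F x) / 2) hdef hdef'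
    (fun x hx => ((hg x (Ioo_subset_Icc_self hx)).add (hFd x hx)).div_const 2)
    fun x hx => (((hg x (Ioo_subset_Icc_self hx)).neg.add (hFd x hx)).div_const 2).congr_deriv
      (by ring)

end Halves

theorem mul_integral_div_le_integral {a b m : ℝ} {u w : ℝ → ℝ} (hab : a ≤ b)
    (hu : ∀ x ∈ Icc a b, 0 ≤ u x) (hw : ∀ x ∈ Icc a b, 0 < w x) (hm : ∀ x ∈ Icc a b, m ≤ w x)
    (hu_int : IntervalIntegrable u volume a b)
    (huw_int : IntervalIntegrable (fun x => u x / w x) volume a b) :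
    m * ∫ x in a..b, u x / w x ≤ ∫ x in a..b, u x := by
  rw [← intervalIntegral.integral_const_mul]
  refine integral_mono_on hab (huw_int.const_mul m) hu_int fun x hx => ?_
  calc m * (u x / w x) ≤ w x * (u x / w x) :=
        mul_le_mul_of_nonneg_right (hm x hx) (div_nonneg (hu x hx) (hw x hx).le)
    _ = u x := mul_div_cancel₀ _ (hw x hx).ne'

theorem integral_le_mul_integral_div {a b M : ℝ} {u w : ℝ → ℝ} (hab : a ≤ b)
    (hu : ∀ x ∈ Icc a b, 0 ≤ u x) (hw : ∀ x ∈ Icc a b, 0 < w x) (hM : ∀ x ∈ Icc a b, w x ≤ M)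
    (hu_int : IntervalIntegrable u volume a b)
    (huw_int : IntervalIntegrable (fun x => u x / w x) volume a b) :
    ∫ x in a..b, u x ≤ M * ∫ x in a..b, u x / w x := by
  rw [← intervalIntegral.integral_const_mul]
  refine integral_mono_on hab hu_int (huw_int.const_mul M) fun x hx => ?_
  calc u x = w x * (u x / w x) := (mul_div_cancel₀ _ (hw x hx).ne').symm
    _ ≤ M * (u x / w x) :=
        mul_le_mul_of_nonneg_right (hM x hx) (div_nonneg (hu x hx) (hw x hx).le)

theorem norm_equivalence_fourier_coefficients
    (g g' f : ℝ → ℝ)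
    (hg : ∀ x ∈ Set.Icc (0:ℝ) 1, HasDerivAt g (g' x) x)
    (hg' : ContinuousOn g' (Set.Icc (0:ℝ) 1))
    (hf : ContinuousOn f (Set.Icc (0:ℝ) 1))
    (hg0 : g 0 = 0) (hg1 : g 1 = 0)
    (F : ℝ → ℝ) (hF : ∀ x, F x = ∫ t in (0:ℝ)..x, f t)
    (h : ℝ → ℝ)
    (hdef : ∀ x ∈ Set.Icc (0:ℝ) 1, h x = (g x + F x) / 2)
    (hdef' : ∀ x ∈ Set.Ico (-1:ℝ) 0, h x = (-g (-x) + F (-x)) / 2)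
    (φ φ' : ℝ → ℝ)
    (hφ : ∀ x, HasDerivAt φ (φ' x) x)
    (hφ' : ContDiff ℝ 1 φ')
    (hφpos : ∀ x, 0 < φ' x)
    (hfe : φ 1 - φ (-1) = 1)
    (A : ℤ → ℂ)
    (hA : ∀ n : ℤ, A n = ∫ x in (-1:ℝ)..1,
        (h x : ℂ) * Complex.exp (2 * Real.pi * Complex.I * (n : ℂ) * (φ x : ℂ)) * (φ' x : ℂ))
    (m0 M0 : ℝ)
    (hm0 : IsLeast (φ' '' Set.Icc (-1:ℝ) 1) m0)
    (hM0 : IsGreatest (φ' '' Set.Icc (-1:ℝ) 1) M0) :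
    8 * Real.pi ^ 2 * m0 * (∑' n : ℤ, (n : ℝ) ^ 2 * ‖A n‖ ^ 2)
      ≤ (∫ x in (0:ℝ)..1, g' x ^ 2) + (∫ x in (0:ℝ)..1, f x ^ 2) ∧
    (∫ x in (0:ℝ)..1, g' x ^ 2) + (∫ x in (0:ℝ)..1, f x ^ 2)
      ≤ 8 * Real.pi ^ 2 * M0 * (∑' n : ℤ, (n : ℝ) ^ 2 * ‖A n‖ ^ 2) := by
  set H := reflectGlue (fun x => (g' x + f x) / 2) (fun x => (g' x - f x) / 2)
  have hP : ContinuousOn (fun x => (g' x + f x) / 2) (Icc 0 1) := (hg'.add hf).div_const 2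
  have hQ : ContinuousOn (fun x => (g' x - f x) / 2) (Icc 0 1) := (hg'.sub hf).div_const 2
  have hφ'c : Continuous φ' := hφ'.continuous
  have hH2 := intervalIntegrable_comp_reflectGlue (Φ := fun p => p.2 ^ 2) (by fun_prop) hP hQ
  have hH2φ := intervalIntegrable_comp_reflectGlue (Φ := fun p => p.2 ^ 2 / φ' p.1)
    ((continuous_snd.pow 2).div (hφ'c.comp continuous_fst) fun p => (hφpos _).ne') hP hQ
  have hh1 : h 1 = h (-1) := by
    rw [hdef 1 (right_mem_Icc.2 zero_le_one), hdef' (-1) ⟨le_rfl, by norm_num⟩, neg_neg, hg1]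
    ring
  have hsum : 4 * π ^ 2 * ∑' n : ℤ, (n : ℝ) ^ 2 * ‖A n‖ ^ 2
      = ∫ x in (-1:ℝ)..1, H x ^ 2 / φ' x := by
    simp only [hA]
    simpa only [Complex.norm_real, norm_eq_abs, sq_abs] using
      four_pi_sq_mul_tsum_sq_mul_norm_sq_integral_mul_exp_comp (u := fun x => (h x : ℂ))
        (u' := fun x => (H x : ℂ)) (by norm_num) (countable_singleton 0)
        (Complex.continuous_ofReal.comp_continuousOn
          (continuousOn_Icc_of_halves hg hf hg0 hF hdef hdef'))
        (fun x hx => (hasDerivAt_of_halves hg hf hF hdef hdef' x hx).ofReal_comp)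
        (intervalIntegrable_comp_reflectGlue (Φ := fun p => (p.2 : ℂ)) (by fun_prop) hP hQ)
        (congrArg _ hh1) (fun x _ => hφ x) (fun x _ => hφpos x) (hφ'c.intervalIntegrable _ _)
        (by simpa only [Complex.norm_real, norm_eq_abs, sq_abs] using hH2φ) hfe
  have hlow := mul_integral_div_le_integral (by norm_num) (fun x _ => sq_nonneg (H x))
    (fun x _ => hφpos x) (fun x hx => hm0.2 ⟨x, hx, rfl⟩) hH2 hH2φ
  have hhigh := integral_le_mul_integral_div (by norm_num) (fun x _ => sq_nonneg (H x))
    (fun x _ => hφpos x) (fun x hx => hM0.2 ⟨x, hx, rfl⟩) hH2 hH2φ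
  rw [← hsum, integral_sq_reflectGlue_half_add_half_sub hg' hf] at hlow hhigh
  constructor <;> linarith
end

section
/- Let ℓ > 1 and let γ : [−1,∞) → [1,∞) be a C¹ strictly increasing bijection with γ(−1) = 1, γ(x) > x, and γ'(x) = ℓ + O(x^{−δ}) as x → ∞ for some δ > 0. Then Abel's equation φ ∘ γ = φ + 1 admits a strictly increasing C¹ solution φ : [−1,∞) → ℝ. -/
/-!
Since `γ' → ℓ > 1`, the orbits of `γ` grow geometrically, uniformly on `[-1, ∞)`, so the bound
`γ' = ℓ + O(x^(-δ))` makes the factors `γ'(γⁿ x) / ℓ` equal to `1 + O(ρⁿ)` uniformly, for some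
`ρ < 1`. Hence `P = ∏ₙ γ' ∘ γⁿ / ℓ` converges to a continuous function with
`P (γ x) γ' x = ℓ P x`, and the substitution `u = γ t` shows that a suitably normalised primitive
`ψ` of `P` solves Schröder's equation `ψ ∘ γ = ℓ ψ`. The first `N` factors of `P` multiply to the
derivative of the strictly increasing `γᴺ / ℓᴺ` and the others to a positive function, so `P`
vanishes on no interval and `ψ` is strictly increasing, hence positive, as
`ψ (γ (-1)) = ℓ ψ (-1)`. Then `φ = log ψ / log ℓ`.
-/

open Real Set Filter Asymptotics Topology MeasureTheory
open scoped Interval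

section TailProduct

variable {X : Type*} {t : ℕ → X → ℝ} {N : ℕ} {b : ℕ → ℝ} {s : Set X} {x : X}

/-- The product `∏ n, t n x`, with the factors from `N` on multiplied through their logarithms,
so that it is meaningful (and continuous) even where one of the first `N` factors vanishes. -/
noncomputable def tailProd (t : ℕ → X → ℝ) (N : ℕ) (x : X) : ℝ :=
  (∏ n ∈ Finset.range N, t n x) * exp (∑' j, log (t (N + j) x))

lemma abs_log_le_two_mul {y c : ℝ} (hc : c ≤ 1 / 2) (hy : |y - 1| ≤ c) : |log y| ≤ 2 * c := by
  have h := abs_log_sub_add_sum_range_le (x := 1 - y) (by rw [abs_sub_comm]; linarith) 0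
  simp only [Finset.sum_range_zero, zero_add, pow_one, sub_sub_cancel, abs_sub_comm 1 y] at h
  calc |log y| ≤ |y - 1| / (1 - |y - 1|) := h
    _ ≤ 2 * c := by
      rw [div_le_iff₀ (by linarith)]
      nlinarith [abs_nonneg (y - 1)]

lemma pos_of_abs_sub_one_le_half {y : ℝ} (hy : |y - 1| ≤ 1 / 2) : 0 < y := by
  linarith [(abs_le.mp hy).1]

lemma summable_log_tail (hb : Summable b) (hb_half : ∀ j, b j ≤ 1 / 2)
    (htb : ∀ j, |t (N + j) x - 1| ≤ b j) : Summable fun j => log (t (N + j) x) :=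
  (hb.mul_left 2).of_norm_bounded fun j => abs_log_le_two_mul (hb_half j) (htb j)

lemma continuousOn_tailProd [TopologicalSpace X] (ht : ∀ n, ContinuousOn (t n) s) (hb : Summable b)
    (hb_half : ∀ j, b j ≤ 1 / 2) (htb : ∀ j, ∀ x ∈ s, |t (N + j) x - 1| ≤ b j) :
    ContinuousOn (tailProd t N) s := by
  have hlog : ∀ j, ContinuousOn (fun x => log (t (N + j) x)) s := fun j =>
    (ht (N + j)).log fun x hx =>
      (pos_of_abs_sub_one_le_half ((htb j x hx).trans (hb_half j))).ne'
  exact (continuousOn_finsetProd _ fun n _ => ht n).mul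
    (continuous_exp.comp_continuousOn (continuousOn_tsum hlog (hb.mul_left 2) fun j x hx =>
      abs_log_le_two_mul (hb_half j) (htb j x hx)))

lemma tailProd_succ_mul (hsum : Summable fun j => log (t (N + j) x)) (hN : 0 < t N x) :
    tailProd (fun n => t (n + 1)) N x * t 0 x = tailProd t N x := by
  rw [tailProd, tailProd, hsum.tsum_eq_zero_add, add_zero, exp_add, exp_log hN, mul_right_comm,
    ← Finset.prod_range_succ' (fun n => t n x), Finset.prod_range_succ]
  simp only [add_assoc]
  ring

end TailProduct

section Iterates

variable {f f' : ℝ → ℝ} {a x : ℝ}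

protected lemma StrictMonoOn.iterate {s : Set ℝ} (hf : StrictMonoOn f s) (hmaps : MapsTo f s s) :
    ∀ n, StrictMonoOn f^[n] s
  | 0 => strictMonoOn_id
  | n + 1 => by
    rw [Function.iterate_succ']
    exact hf.comp (hf.iterate hmaps n) (hmaps.iterate n)

protected lemma MonotoneOn.iterate {s : Set ℝ} (hf : MonotoneOn f s) (hmaps : MapsTo f s s) :
    ∀ n, MonotoneOn f^[n] s
  | 0 => monotoneOn_id
  | n + 1 => by
    rw [Function.iterate_succ']
    exact hf.comp (hf.iterate hmaps n) (hmaps.iterate n)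

lemma hasDerivAt_iterate {s : Set ℝ} (hmaps : MapsTo f s s)
    (hf : ∀ x ∈ s, HasDerivAt f (f' x) x) :
    ∀ n, ∀ x ∈ s, HasDerivAt f^[n] (∏ k ∈ Finset.range n, f' (f^[k] x)) x
  | 0, x, _ => by simpa using hasDerivAt_id x
  | n + 1, x, hx => by
    rw [Finset.prod_range_succ']
    exact (hasDerivAt_iterate hmaps hf n (f x) (hmaps hx)).comp x (hf x hx)

lemma mapsTo_Ici_of_lt (hlt : ∀ x ∈ Ici a, x < f x) : MapsTo f (Ici a) (Ici a) :=
  fun x hx => le_trans hx (hlt x hx).le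

lemma tendsto_iterate_atTop (hf : ContinuousOn f (Ici a)) (hlt : ∀ x ∈ Ici a, x < f x)
    (hx : x ∈ Ici a) : Tendsto (fun n => f^[n] x) atTop atTop := by
  have hmem : ∀ n, f^[n] x ∈ Ici a := fun n => (mapsTo_Ici_of_lt hlt).iterate n hx
  have hmono : StrictMono fun n => f^[n] x := strictMono_nat_of_lt_succ fun n => by
    simpa only [Function.iterate_succ_apply'] using hlt _ (hmem n)
  refine (tendsto_atTop_of_monotone hmono.monotone).resolve_right fun ⟨L, hL⟩ => ?_
  have hLmem : L ∈ Ici a := le_trans (hmem 0) (hmono.monotone.ge_of_tendsto hL 0)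
  -- a finite limit would be a fixed point of `f`
  have hfL : Tendsto (fun n => f (f^[n] x)) atTop (𝓝 (f L)) :=
    (hf L hLmem).tendsto.comp (tendsto_nhdsWithin_iff.mpr ⟨hL, Eventually.of_forall hmem⟩)
  have hL' : Tendsto (fun n => f (f^[n] x)) atTop (𝓝 L) := by
    simpa only [Function.comp_def, Function.iterate_succ_apply'] using
      hL.comp (tendsto_add_atTop_nat 1)
  exact (hlt L hLmem).ne' (tendsto_nhds_unique hfL hL')

lemma eventually_mul_le_of_tendsto_deriv {ℓ s : ℝ} (hf : ∀ᶠ x in atTop, HasDerivAt f (f' x) x)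
    (hf' : Tendsto f' atTop (𝓝 ℓ)) (hs : s < ℓ) : ∀ᶠ x in atTop, s * x ≤ f x := by
  obtain ⟨r, hsr, hrℓ⟩ := exists_between hs
  obtain ⟨M, hM⟩ := (hf.and (hf'.eventually_const_le hrℓ)).exists_forall_of_atTop
  have hslope : ∀ x, M ≤ x → r * (x - M) ≤ f x - f M := fun x hx =>
    (convex_Ici M).mul_sub_le_image_sub_of_le_deriv
      (fun y hy => (hM y hy).1.continuousAt.continuousWithinAt)
      (fun y hy => (hM y (interior_subset hy)).1.differentiableAt.differentiableWithinAt)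
      (fun y hy => (hM y (interior_subset hy)).1.deriv ▸ (hM y (interior_subset hy)).2)
      M self_mem_Ici x hx hx
  filter_upwards [eventually_ge_atTop M, eventually_ge_atTop ((r * M - f M) / (r - s))]
    with x hxM hx
  rw [div_le_iff₀ (by linarith)] at hx
  nlinarith [hslope x hxM]

lemma exists_geometric_le_iterate {s : ℝ} (hmono : MonotoneOn f (Ici a))
    (hmaps : MapsTo f (Ici a) (Ici a)) (htend : Tendsto (fun n => f^[n] a) atTop atTop)
    (hs : 1 ≤ s) (hgrow : ∀ᶠ x in atTop, s * x ≤ f x) :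
    ∃ N c, 0 < c ∧ ∀ k, ∀ x ∈ Ici a, c * s ^ k ≤ f^[N + k] x := by
  obtain ⟨c, hc⟩ := (hgrow.and (eventually_gt_atTop 0)).exists_forall_of_atTop
  obtain ⟨N, hN⟩ := (htend.eventually_ge_atTop c).exists_forall_of_atTop
  have hc0 : 0 < c := (hc c le_rfl).2
  have horbit : ∀ k, c * s ^ k ≤ f^[N + k] a := by
    intro k
    induction k with
    | zero => simpa using hN N le_rfl
    | succ k ih =>
      have hck : c ≤ f^[N + k] a := le_trans (le_mul_of_one_le_right hc0.le (one_le_pow₀ hs)) ih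
      rw [← add_assoc, Function.iterate_succ_apply', pow_succ]
      nlinarith [(hc _ hck).1]
  exact ⟨N, c, hc0, fun k x hx =>
    (horbit k).trans (hmono.iterate hmaps (N + k) self_mem_Ici hx hx)⟩

end Iterates

lemma eventually_abs_le_geometric_of_isBigO {g : ℝ → ℝ} {δ c s : ℝ}
    (hg : g =O[atTop] fun y => y ^ (-δ)) (hδ : 0 < δ) (hc : 0 < c) (hs : 1 < s) :
    ∃ K ρ, 0 ≤ ρ ∧ ρ < 1 ∧ ∀ᶠ k : ℕ in atTop, ∀ y, c * s ^ k ≤ y → |g y| ≤ K * ρ ^ k := by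
  obtain ⟨K, hK, hgK⟩ := hg.exists_nonneg
  obtain ⟨M, hM⟩ := hgK.bound.exists_forall_of_atTop
  have hs0 : 0 < s := by linarith
  refine ⟨K * c ^ (-δ), s ^ (-δ), by positivity, rpow_lt_one_of_one_lt_of_neg hs (by linarith), ?_⟩
  filter_upwards [((tendsto_pow_atTop_atTop_of_one_lt hs).const_mul_atTop hc).eventually_ge_atTop M]
    with k hk y hy
  have hck : 0 < c * s ^ k := by positivity
  calc |g y| ≤ K * ‖y ^ (-δ)‖ := hM y (hk.trans hy)
    _ = K * y ^ (-δ) := by rw [norm_of_nonneg (rpow_nonneg (hck.trans_le hy).le _)]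
    _ ≤ K * (c * s ^ k) ^ (-δ) :=
      mul_le_mul_of_nonneg_left (rpow_le_rpow_of_nonpos hck hy (neg_nonpos.mpr hδ.le)) hK
    _ = K * c ^ (-δ) * (s ^ (-δ)) ^ k := by
      rw [mul_rpow hc.le (by positivity), rpow_pow_comm hs0.le, mul_assoc]

lemma exists_summable_bound_deriv_iterate {γ γ' : ℝ → ℝ} {a ℓ δ : ℝ} (hℓ : 1 < ℓ) (hδ : 0 < δ)
    (hderiv : ∀ x ∈ Ici a, HasDerivAt γ (γ' x) x) (hmono : MonotoneOn γ (Ici a))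
    (hlt : ∀ x ∈ Ici a, x < γ x) (hasymp : (fun x => γ' x - ℓ) =O[atTop] fun x => x ^ (-δ)) :
    ∃ N b, Summable b ∧ (∀ j, b j ≤ 1 / 2) ∧
      ∀ j, ∀ x ∈ Ici a, |γ' (γ^[N + j] x) / ℓ - 1| ≤ b j := by
  have hγ'lim : Tendsto γ' atTop (𝓝 ℓ) := by
    simpa using (hasymp.trans_tendsto (tendsto_rpow_neg_atTop hδ)).add_const ℓ
  obtain ⟨N, c, hc, hgeom⟩ := exists_geometric_le_iterate (s := (1 + ℓ) / 2) hmono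
    (mapsTo_Ici_of_lt hlt)
    (tendsto_iterate_atTop (fun x hx => (hderiv x hx).continuousAt.continuousWithinAt) hlt
      self_mem_Ici)
    (by linarith)
    (eventually_mul_le_of_tendsto_deriv ((eventually_ge_atTop a).mono hderiv) hγ'lim (by linarith))
  obtain ⟨K, ρ, hρ0, hρ1, hK⟩ := eventually_abs_le_geometric_of_isBigO
    (hasymp.const_mul_left ℓ⁻¹) hδ hc (s := (1 + ℓ) / 2) (by linarith)
  have hsmall : ∀ᶠ k : ℕ in atTop, K * ρ ^ k ≤ 1 / 2 := by
    refine ((tendsto_pow_atTop_nhds_zero_of_lt_one hρ0 hρ1).const_mul K).eventually_le_const ?_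
    norm_num
  obtain ⟨k, hk⟩ := (hK.and hsmall).exists_forall_of_atTop
  refine ⟨N + k, fun j => K * ρ ^ k * ρ ^ j,
    (summable_geometric_of_lt_one hρ0 hρ1).mul_left _, fun j => ?_, fun j x hx => ?_⟩
  · dsimp only
    rw [mul_assoc, ← pow_add]
    exact (hk (k + j) le_self_add).2
  · have hbound := (hk (k + j) le_self_add).1 _ (hgeom (k + j) x hx)
    dsimp only
    rw [mul_assoc, ← pow_add, add_assoc]
    convert hbound using 2
    field_simp

lemma integral_mul_pos_of_integral_pos {f g : ℝ → ℝ} {p q : ℝ} (hf : ∀ x ∈ Ι p q, 0 ≤ f x)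
    (hg : ∀ x ∈ Ι p q, 0 < g x) (hfi : IntervalIntegrable f volume p q)
    (hfgi : IntervalIntegrable (fun x => f x * g x) volume p q) (h : 0 < ∫ x in p..q, f x) :
    0 < ∫ x in p..q, f x * g x := by
  rw [intervalIntegral.integral_pos_iff_support_of_nonneg_ae'
    (ae_restrict_of_forall_mem measurableSet_uIoc hf) hfi] at h
  rw [intervalIntegral.integral_pos_iff_support_of_nonneg_ae'
    (ae_restrict_of_forall_mem measurableSet_uIoc fun x hx => mul_nonneg (hf x hx) (hg x hx).le)
    hfgi]
  refine ⟨h.1, h.2.trans_le (measure_mono fun x ⟨hfx, hx⟩ => ⟨?_, hx⟩)⟩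
  rw [uIoc_of_le h.1.le] at hg
  exact mul_ne_zero hfx (hg x hx).ne'

lemma HasDerivAt.nonneg_of_monotoneOn_Ici {g : ℝ → ℝ} {g' a x : ℝ} (hd : HasDerivAt g g' x)
    (hg : MonotoneOn g (Ici a)) (hx : x ∈ Ici a) : 0 ≤ g' := by
  refine hd.hasDerivWithinAt.nonneg_of_monotoneOn ?_ hg
  rw [accPt_principal_iff_nhdsWithin]
  exact (nhdsGT_neBot x).mono
    (nhdsWithin_mono _ fun y hy =>
      ⟨(mem_Ici.mp hx).trans (mem_Ioi.mp hy).le, (mem_Ioi.mp hy).ne'⟩)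

section SchroederDensity

variable {γ γ' : ℝ → ℝ} {a ℓ : ℝ} {N : ℕ} {b : ℕ → ℝ}

noncomputable def schroederDensity (γ γ' : ℝ → ℝ) (ℓ : ℝ) (N : ℕ) : ℝ → ℝ :=
  tailProd (fun n x => γ' (γ^[n] x) / ℓ) N

lemma continuousOn_schroederDensity (hγ : ContinuousOn γ (Ici a))
    (hmaps : MapsTo γ (Ici a) (Ici a)) (hγ' : ContinuousOn γ' (Ici a)) (hb : Summable b)
    (hb_half : ∀ j, b j ≤ 1 / 2) (htail : ∀ j, ∀ x ∈ Ici a, |γ' (γ^[N + j] x) / ℓ - 1| ≤ b j) :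
    ContinuousOn (schroederDensity γ γ' ℓ N) (Ici a) :=
  continuousOn_tailProd (fun n => (hγ'.comp (hγ.iterate hmaps n) (hmaps.iterate n)).div_const ℓ)
    hb hb_half htail

lemma schroederDensity_comp_mul (hℓ : ℓ ≠ 0) (hb : Summable b) (hb_half : ∀ j, b j ≤ 1 / 2)
    (htail : ∀ j, ∀ x ∈ Ici a, |γ' (γ^[N + j] x) / ℓ - 1| ≤ b j) {x : ℝ} (hx : x ∈ Ici a) :
    schroederDensity γ γ' ℓ N (γ x) * γ' x = ℓ * schroederDensity γ γ' ℓ N x := by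
  set t : ℕ → ℝ → ℝ := fun n x => γ' (γ^[n] x) / ℓ
  have hshift : tailProd (fun n => t (n + 1)) N x * t 0 x = tailProd t N x :=
    tailProd_succ_mul (summable_log_tail hb hb_half fun j => htail j x hx)
      (pos_of_abs_sub_one_le_half ((htail 0 x hx).trans (hb_half 0)))
  have hcomp : schroederDensity γ γ' ℓ N (γ x) = tailProd (fun n => t (n + 1)) N x := rfl
  have ht0 : γ' x = ℓ * t 0 x := (mul_div_cancel₀ _ hℓ).symm
  calc schroederDensity γ γ' ℓ N (γ x) * γ' x
      = ℓ * (tailProd (fun n => t (n + 1)) N x * t 0 x) := by rw [hcomp, ht0]; ring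
    _ = ℓ * schroederDensity γ γ' ℓ N x := by rw [hshift]; rfl

lemma integral_schroederDensity_pos (hderiv : ∀ x ∈ Ici a, HasDerivAt γ (γ' x) x)
    (hγ' : ContinuousOn γ' (Ici a)) (hmono : StrictMonoOn γ (Ici a))
    (hmaps : MapsTo γ (Ici a) (Ici a)) (hℓ : 0 < ℓ) (hb : Summable b) (hb_half : ∀ j, b j ≤ 1 / 2)
    (htail : ∀ j, ∀ x ∈ Ici a, |γ' (γ^[N + j] x) / ℓ - 1| ≤ b j) {p q : ℝ} (hp : a ≤ p)
    (hpq : p < q) : 0 < ∫ x in p..q, schroederDensity γ γ' ℓ N x := by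
  have hγ : ContinuousOn γ (Ici a) := fun x hx => (hderiv x hx).continuousAt.continuousWithinAt
  have hsub : uIcc p q ⊆ Ici a := fun x hx => hp.trans (uIcc_of_le hpq.le ▸ hx).1
  set D : ℝ → ℝ := fun x => ∏ n ∈ Finset.range N, γ' (γ^[n] x) / ℓ
  have hD_deriv : ∀ x ∈ uIcc p q, HasDerivAt (fun y => γ^[N] y / ℓ ^ N) (D x) x := by
    intro x hx
    have hD : D x = (∏ n ∈ Finset.range N, γ' (γ^[n] x)) / ℓ ^ N := by
      simp only [D, Finset.prod_div_distrib, Finset.prod_const, Finset.card_range]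
    rw [hD]
    exact (hasDerivAt_iterate hmaps hderiv N x (hsub hx)).div_const (ℓ ^ N)
  have hD_cont : ContinuousOn D (Ici a) := continuousOn_finsetProd _ fun n _ =>
    (hγ'.comp (hγ.iterate hmaps n) (hmaps.iterate n)).div_const ℓ
  have hD_int : 0 < ∫ x in p..q, D x := by
    rw [intervalIntegral.integral_eq_sub_of_hasDerivAt hD_deriv
      ((hD_cont.mono hsub).intervalIntegrable), sub_pos]
    exact div_lt_div_of_pos_right
      (hmono.iterate hmaps N (hsub left_mem_uIcc) (hsub right_mem_uIcc) hpq) (by positivity)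
  have hD_nonneg : ∀ x ∈ Ι p q, 0 ≤ D x := fun x hx =>
    have hx' := hsub (uIoc_subset_uIcc hx)
    Finset.prod_nonneg fun n _ => div_nonneg
      ((hderiv _ (hmaps.iterate n hx')).nonneg_of_monotoneOn_Ici hmono.monotoneOn
        (hmaps.iterate n hx')) hℓ.le
  exact integral_mul_pos_of_integral_pos hD_nonneg (fun x _ => exp_pos _)
    ((hD_cont.mono hsub).intervalIntegrable)
    (((continuousOn_schroederDensity hγ hmaps hγ' hb hb_half htail).mono hsub).intervalIntegrable)
    hD_int

end SchroederDensity

section SchroederPotential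

variable {P γ γ' : ℝ → ℝ} {a b ℓ x : ℝ}

/-- `P` is frozen at `P a` left of `a`, which makes the integrand continuous on `ℝ` and the
potential differentiable at `a` itself; for `b = γ a` the constant makes `ψ ∘ γ = ℓ ψ` exact. -/
noncomputable def schroederPotential (P : ℝ → ℝ) (a b ℓ : ℝ) (x : ℝ) : ℝ :=
  (∫ t in a..x, P (max t a)) + (∫ t in a..b, P (max t a)) / (ℓ - 1)

lemma continuous_comp_max (hP : ContinuousOn P (Ici a)) : Continuous fun t => P (max t a) :=
  hP.comp_continuous (continuous_id.max continuous_const) fun t => le_max_right t a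

lemma hasDerivAt_schroederPotential (hP : ContinuousOn P (Ici a)) (hx : x ∈ Ici a) :
    HasDerivAt (schroederPotential P a b ℓ) (P x) x := by
  have h := ((continuous_comp_max hP).integral_hasStrictDerivAt a x).hasDerivAt
  rw [max_eq_left (mem_Ici.mp hx)] at h
  exact h.add_const _

lemma schroederPotential_sub (hP : ContinuousOn P (Ici a)) (p q : ℝ) :
    schroederPotential P a b ℓ q - schroederPotential P a b ℓ p = ∫ t in p..q, P (max t a) := by
  rw [schroederPotential, schroederPotential, add_sub_add_right_eq_sub,
    intervalIntegral.integral_interval_sub_left ((continuous_comp_max hP).intervalIntegrable _ _)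
      ((continuous_comp_max hP).intervalIntegrable _ _)]

lemma strictMonoOn_schroederPotential (hP : ContinuousOn P (Ici a))
    (hpos : ∀ p q, a ≤ p → p < q → 0 < ∫ t in p..q, P t) :
    StrictMonoOn (schroederPotential P a b ℓ) (Ici a) := by
  intro p hp q _ hpq
  rw [← sub_pos, schroederPotential_sub hP, intervalIntegral.integral_congr (g := P) fun t ht => ?_]
  · exact hpos p q hp hpq
  · rw [max_eq_left ((mem_Ici.mp hp).trans (uIcc_of_le hpq.le ▸ ht).1)]

lemma schroederPotential_comp (hderiv : ∀ x ∈ Ici a, HasDerivAt γ (γ' x) x)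
    (hγ' : ContinuousOn γ' (Ici a)) (hmaps : MapsTo γ (Ici a) (Ici a))
    (hP : ContinuousOn P (Ici a)) (hPγ : ∀ x ∈ Ici a, P (γ x) * γ' x = ℓ * P x) (hℓ : ℓ ≠ 1)
    (hx : x ∈ Ici a) :
    schroederPotential P a (γ a) ℓ (γ x) = ℓ * schroederPotential P a (γ a) ℓ x := by
  set Q : ℝ → ℝ := fun t => P (max t a)
  have hsub : uIcc a x ⊆ Ici a := fun t ht => (uIcc_of_le (mem_Ici.mp hx) ▸ ht).1
  have hsubst : ∫ t in γ a..γ x, Q t = ℓ * ∫ t in a..x, Q t := by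
    rw [← intervalIntegral.integral_comp_mul_deriv (fun t ht => hderiv t (hsub ht))
      (hγ'.mono hsub) (continuous_comp_max hP), ← intervalIntegral.integral_const_mul]
    refine intervalIntegral.integral_congr fun t ht => ?_
    simp only [Function.comp_apply, Q, max_eq_left (mem_Ici.mp (hsub ht)),
      max_eq_left (mem_Ici.mp (hmaps (hsub ht)))]
    exact hPγ t (hsub ht)
  have hsplit : ∫ t in a..γ x, Q t = (∫ t in a..γ a, Q t) + ∫ t in γ a..γ x, Q t :=
    (intervalIntegral.integral_add_adjacent_intervals
      ((continuous_comp_max hP).intervalIntegrable _ _)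
      ((continuous_comp_max hP).intervalIntegrable _ _)).symm
  have hℓ1 : ℓ - 1 ≠ 0 := sub_ne_zero.mpr hℓ
  rw [schroederPotential, schroederPotential, hsplit, hsubst]
  field_simp
  ring

end SchroederPotential

section Schroeder

variable {ψ ψ' γ : ℝ → ℝ} {a ℓ : ℝ}

lemma pos_of_schroeder (hℓ : 1 < ℓ) (hψ : StrictMonoOn ψ (Ici a)) (hγa : a < γ a)
    (hSch : ψ (γ a) = ℓ * ψ a) {x : ℝ} (hx : x ∈ Ici a) : 0 < ψ x := by
  have hψa : 0 < ψ a := by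
    have := hψ self_mem_Ici (mem_Ici.mpr hγa.le) hγa
    nlinarith
  exact hψa.trans_le (hψ.monotoneOn self_mem_Ici hx hx)

theorem exists_abel_of_schroeder (hℓ : 1 < ℓ) (hψ : StrictMonoOn ψ (Ici a))
    (hderiv : ∀ x ∈ Ici a, HasDerivAt ψ (ψ' x) x) (hψ' : ContinuousOn ψ' (Ici a))
    (hγa : a < γ a) (hSch : ∀ x ∈ Ici a, ψ (γ x) = ℓ * ψ x) :
    ∃ φ φ' : ℝ → ℝ, StrictMonoOn φ (Ici a) ∧ (∀ x ∈ Ici a, HasDerivAt φ (φ' x) x) ∧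
      ContinuousOn φ' (Ici a) ∧ ∀ x ∈ Ici a, φ (γ x) = φ x + 1 := by
  have hpos : ∀ x ∈ Ici a, 0 < ψ x := fun x hx =>
    pos_of_schroeder hℓ hψ hγa (hSch a self_mem_Ici) hx
  have hlogℓ : 0 < log ℓ := log_pos hℓ
  refine ⟨fun x => log (ψ x) / log ℓ, fun x => ψ' x / ψ x / log ℓ, fun p hp q hq hpq => ?_,
    fun x hx => ((hderiv x hx).log (hpos x hx).ne').div_const _, ?_, fun x hx => ?_⟩
  · exact div_lt_div_of_pos_right (log_lt_log (hpos p hp) (hψ hp hq hpq)) hlogℓ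
  · exact (hψ'.div (fun x hx => (hderiv x hx).continuousAt.continuousWithinAt)
      fun x hx => (hpos x hx).ne').div_const _
  · show log (ψ (γ x)) / log ℓ = log (ψ x) / log ℓ + 1
    rw [hSch x hx, log_mul (by positivity) (hpos x hx).ne', add_div, div_self hlogℓ.ne', add_comm]

end Schroeder

theorem abel_equation_solution_expansive_general
    (ℓ δ : ℝ) (hℓ : 1 < ℓ) (hδ : 0 < δ)
    (γ γ' : ℝ → ℝ)
    (hγderiv : ∀ x ∈ Ici (-1:ℝ), HasDerivAt γ (γ' x) x)
    (hγ'cont : ContinuousOn γ' (Ici (-1:ℝ)))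
    (hmono : StrictMonoOn γ (Ici (-1:ℝ)))
    (hfix : ∀ x ∈ Ici (-1:ℝ), x < γ x)
    (hasymp : (fun x => γ' x - ℓ) =O[atTop] fun x : ℝ => x ^ (-δ)) :
    ∃ φ φ' : ℝ → ℝ,
      StrictMonoOn φ (Ici (-1:ℝ)) ∧
      (∀ x ∈ Ici (-1:ℝ), HasDerivAt φ (φ' x) x) ∧
      ContinuousOn φ' (Ici (-1:ℝ)) ∧
      ∀ x ∈ Ici (-1:ℝ), φ (γ x) = φ x + 1 := by
  obtain ⟨N, b, hb, hb_half, htail⟩ :=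
    exists_summable_bound_deriv_iterate hℓ hδ hγderiv hmono.monotoneOn hfix hasymp
  have hmaps := mapsTo_Ici_of_lt hfix
  have hγcont : ContinuousOn γ (Ici (-1:ℝ)) := fun x hx =>
    (hγderiv x hx).continuousAt.continuousWithinAt
  set P := schroederDensity γ γ' ℓ N
  have hP : ContinuousOn P (Ici (-1:ℝ)) :=
    continuousOn_schroederDensity hγcont hmaps hγ'cont hb hb_half htail
  have hPγ : ∀ x ∈ Ici (-1:ℝ), P (γ x) * γ' x = ℓ * P x := fun x hx =>
    schroederDensity_comp_mul (by positivity) hb hb_half htail hx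
  have hψ : StrictMonoOn (schroederPotential P (-1) (γ (-1)) ℓ) (Ici (-1:ℝ)) :=
    strictMonoOn_schroederPotential hP fun p q hp hpq =>
      integral_schroederDensity_pos hγderiv hγ'cont hmono hmaps (by positivity) hb hb_half htail
        hp hpq
  exact exists_abel_of_schroeder hℓ hψ (fun x hx => hasDerivAt_schroederPotential hP hx) hP
    (hfix (-1) self_mem_Ici) fun x hx =>
      schroederPotential_comp hγderiv hγ'cont hmaps hP hPγ hℓ.ne' hx

theorem abel_equation_solution_expansive
    (ℓ δ : ℝ) (hℓ : 1 < ℓ) (hδ : 0 < δ)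
    (γ γ' : ℝ → ℝ)
    (hγderiv : ∀ x ∈ Ici (-1:ℝ), HasDerivAt γ (γ' x) x)
    (hγ'cont : ContinuousOn γ' (Ici (-1:ℝ)))
    (hmono : StrictMonoOn γ (Ici (-1:ℝ)))
    (himg : γ '' Ici (-1:ℝ) = Ici (1:ℝ))
    (hγm1 : γ (-1) = 1)
    (hfix : ∀ x ∈ Ici (-1:ℝ), x < γ x)
    (hasymp : (fun x => γ' x - ℓ) =O[atTop] fun x : ℝ => x ^ (-δ)) :
    ∃ φ φ' : ℝ → ℝ,
      StrictMonoOn φ (Ici (-1:ℝ)) ∧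
      (∀ x ∈ Ici (-1:ℝ), HasDerivAt φ (φ' x) x) ∧
      ContinuousOn φ' (Ici (-1:ℝ)) ∧
      ∀ x ∈ Ici (-1:ℝ), φ (γ x) = φ x + 1 :=
  abel_equation_solution_expansive_general ℓ δ hℓ hδ γ γ' hγderiv hγ'cont hmono hfix hasymp
end
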